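/- arXiv:2209.13435 — 3 statements merged into one kernel-verified Lean document; each statement's English description precedes it below -/
import Mathlib

section
/- With β = 1/(1+σ²), Û ∈ ℝ^{n×d} having orthonormal columns, Û_⊥ its orthonormal complement, and U ∈ ℝ^{n×d} with orthonormal columns, the risk of the PCA-type estimator W = β·ÛÛᵀ satisfies the exact identity R(W) = ((1+2σ²)/(1+σ²)²)·(1/d)‖Û_⊥ᵀU‖_F² + σ²/(1+σ²), where R(W) = (1/d)‖(W − I)U‖_F² + (σ²/d)‖W‖_F². -/
open Matrix

lemma sum_sq_eq_trace {a b : ℕ} (M : Matrix (Fin a) (Fin b) ℝ) :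
    ∑ i, ∑ j, (M i j) ^ 2 = Matrix.trace (Mᵀ * M) := by
  simp only [Matrix.trace, Matrix.diag, Matrix.mul_apply, Matrix.transpose_apply, sq]
  rw [Finset.sum_comm]

/-- **Exact risk identity for the PCA-type estimator.**
With `β = 1/(1+σ²)` and `W = β Û Ûᵀ`, the risk
`R(W) = (1/d)‖(W − I)U‖_F² + (σ²/d)‖W‖_F²` satisfies
`R(W) = ((1+2σ²)/(1+σ²)²)·(1/d)‖Û⊥ᵀ U‖_F² + σ²/(1+σ²)`. -/
theorem risk_identity_pca_estimator
    (n d : ℕ) (hd : 0 < d) (σ : ℝ) (hσ : 0 < σ ^ 2)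
    (U Uhat : Matrix (Fin n) (Fin d) ℝ)
    (Uperp : Matrix (Fin n) (Fin (n - d)) ℝ)
    (hU : Uᵀ * U = 1)
    (hUhat : Uhatᵀ * Uhat = 1)
    (hUperp : Uperpᵀ * Uperp = 1)
    (hcomp : Uhat * Uhatᵀ + Uperp * Uperpᵀ = 1) :
    (1 / (d : ℝ)) * ∑ i, ∑ j,
        ((((1 / (1 + σ ^ 2)) • (Uhat * Uhatᵀ) - 1) * U : Matrix (Fin n) (Fin d) ℝ) i j) ^ 2
      + (σ ^ 2 / (d : ℝ)) * ∑ i, ∑ j,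
        ((((1 / (1 + σ ^ 2)) • (Uhat * Uhatᵀ) : Matrix (Fin n) (Fin n) ℝ)) i j) ^ 2
      = ((1 + 2 * σ ^ 2) / (1 + σ ^ 2) ^ 2)
          * ((1 / (d : ℝ)) * ∑ i, ∑ j, ((Uperpᵀ * U : Matrix (Fin (n - d)) (Fin d) ℝ) i j) ^ 2)
        + σ ^ 2 / (1 + σ ^ 2) := by
  have hd' : (d : ℝ) ≠ 0 := Nat.cast_ne_zero.mpr hd.ne'
  have hs : (1 + σ ^ 2) ≠ 0 := by positivity
  set β : ℝ := 1 / (1 + σ ^ 2) with hβ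
  set P : Matrix (Fin n) (Fin n) ℝ := Uhat * Uhatᵀ with hP
  set Q : Matrix (Fin n) (Fin n) ℝ := Uperp * Uperpᵀ with hQ
  have hPT : Pᵀ = P := by rw [hP, Matrix.transpose_mul, Matrix.transpose_transpose]
  have hPP : P * P = P := by
    rw [hP]; rw [Matrix.mul_assoc, ← Matrix.mul_assoc Uhatᵀ, hUhat, Matrix.one_mul]
  have htrP : Matrix.trace P = (d : ℝ) := by
    rw [hP, Matrix.trace_mul_comm, hUhat, Matrix.trace_one]
    simp
  set t : ℝ := Matrix.trace (Uᵀ * Q * U) with ht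
  have hUPU : Matrix.trace (Uᵀ * P * U) = (d : ℝ) - t := by
    have hPQ : P = 1 - Q := by rw [eq_sub_iff_add_eq, hP, hQ]; exact hcomp
    rw [hPQ, Matrix.mul_sub, Matrix.mul_one, Matrix.sub_mul, hU, Matrix.trace_sub,
      Matrix.trace_one, ht]
    simp
  rw [sum_sq_eq_trace, sum_sq_eq_trace, sum_sq_eq_trace]
  have h3 : Matrix.trace ((Uperpᵀ * U)ᵀ * (Uperpᵀ * U)) = t := by
    rw [ht, Matrix.transpose_mul, Matrix.transpose_transpose, hQ]
    rw [Matrix.mul_assoc, Matrix.mul_assoc, Matrix.mul_assoc]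
  have h2 : Matrix.trace ((β • P)ᵀ * (β • P)) = β ^ 2 * (d : ℝ) := by
    rw [Matrix.transpose_smul, hPT, Matrix.smul_mul, Matrix.mul_smul, hPP, smul_smul,
      Matrix.trace_smul, htrP, smul_eq_mul, sq]
  have h1 : Matrix.trace (((β • P - 1) * U)ᵀ * ((β • P - 1) * U))
      = (β ^ 2 - 2 * β) * ((d : ℝ) - t) + (d : ℝ) := by
    have hkey : (β • P - 1)ᵀ = β • P - 1 := by
      rw [Matrix.transpose_sub, Matrix.transpose_smul, hPT, Matrix.transpose_one]
    have hmid : (β • P - 1) * (β • P - 1) = (β ^ 2 - 2 * β) • P + 1 := by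
      rw [Matrix.sub_mul, Matrix.mul_sub, Matrix.mul_sub, Matrix.smul_mul, Matrix.mul_smul, hPP,
        Matrix.one_mul, Matrix.mul_one, smul_smul, one_mul, pow_two, two_mul, sub_smul, add_smul]
      abel
    have hexp : ((β • P - 1) * U)ᵀ * ((β • P - 1) * U)
        = (β ^ 2 - 2 * β) • (Uᵀ * P * U) + Uᵀ * U := by
      rw [Matrix.transpose_mul, hkey, Matrix.mul_assoc Uᵀ, ← Matrix.mul_assoc (β • P - 1), hmid,
        Matrix.add_mul, Matrix.smul_mul, Matrix.one_mul, Matrix.mul_add, Matrix.mul_smul,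
        ← Matrix.mul_assoc]
    rw [hexp, Matrix.trace_add, Matrix.trace_smul, hUPU, hU, Matrix.trace_one, smul_eq_mul]
    simp
  rw [h1, h2, h3, hβ]
  field_simp
  ring
end

section
/- If 0 < ησ² ≤ 1 for all singular values σ_{y,i} of Y, then the gradient descent iterates W^k = X V_y D_k U_yᵀ (with D_k diagonal with entries (1 − (1 − ησ_{y,i}²)^k)/σ_{y,i}) converge as k → ∞ to W^∞ = X Y⁺, where Y⁺ denotes the Moore–Penrose pseudoinverse of Y. -/
open Matrix Filter Topology

/-! In the eigenbasis of `YᵀY` gradient descent decouples: the `i`-th diagonal entry of `D_k`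
is `(1 - (1 - η σᵢ²)^k) / σᵢ`, and `|1 - η σᵢ²| < 1` makes the geometric term vanish, so
`D_k → Σ_y⁻¹`. Multiplication by the fixed matrices `X V_y` and `U_yᵀ` is continuous. -/

theorem tendsto_one_sub_one_sub_pow_nhds_one {a : ℝ} (ha₀ : 0 < a) (ha₂ : a < 2) :
    Tendsto (fun k : ℕ => 1 - (1 - a) ^ k) atTop (𝓝 1) := by
  have hgeom : Tendsto (fun k : ℕ => (1 - a) ^ k) atTop (𝓝 0) :=
    tendsto_pow_atTop_nhds_zero_of_abs_lt_one (abs_lt.2 ⟨by linarith, by linarith⟩)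
  simpa using tendsto_const_nhds.sub hgeom

theorem tendsto_matrix_diagonal {ι α R : Type*} [DecidableEq ι] [Zero R] [TopologicalSpace R]
    {d : α → ι → R} {l : Filter α} {d₀ : ι → R} (h : ∀ i, Tendsto (fun k => d k i) l (𝓝 (d₀ i))) :
    Tendsto (fun k => diagonal (d k)) l (𝓝 (diagonal d₀)) :=
  (continuous_id.matrix_diagonal.tendsto d₀).comp (tendsto_pi_nhds.2 h)

theorem gradient_descent_converges_to_pseudoinverse_general
    (n N : ℕ) (η : ℝ)
    (X : Matrix (Fin n) (Fin N) ℝ)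
    (Uy : Matrix (Fin n) (Fin N) ℝ) (Vy : Matrix (Fin N) (Fin N) ℝ)
    (σs : Fin N → ℝ)
    (hη : ∀ i, 0 < η * σs i ^ 2 ∧ η * σs i ^ 2 ≤ 1) :
    Tendsto
      (fun k : ℕ =>
        X * Vy * Matrix.diagonal (fun i => (1 - (1 - η * σs i ^ 2) ^ k) / σs i) * Uyᵀ)
      atTop
      (nhds (X * (Vy * Matrix.diagonal (fun i => (σs i)⁻¹) * Uyᵀ))) := by
  have hD : Tendsto (fun k : ℕ => diagonal fun i => (1 - (1 - η * σs i ^ 2) ^ k) / σs i)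
      atTop (𝓝 (diagonal fun i => (σs i)⁻¹)) := by
    refine tendsto_matrix_diagonal fun i => ?_
    have hi := tendsto_one_sub_one_sub_pow_nhds_one (hη i).1 (by linarith [(hη i).2])
    simpa using hi.div_const (σs i)
  have hsandwich : Continuous fun D : Matrix (Fin N) (Fin N) ℝ => X * Vy * D * Uyᵀ :=
    (continuous_const.matrix_mul continuous_id).matrix_mul continuous_const
  simpa only [Function.comp_def, Matrix.mul_assoc] using (hsandwich.tendsto _).comp hD

/-- **Convergence of gradient descent to `X Y⁺`.**
If `0 < η σᵢ² ≤ 1` for all singular values `σᵢ` of `Y = U_y Σ_y V_yᵀ`, the iterates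
`W^k = X V_y D_k U_yᵀ` (with `D_k` diagonal with entries `(1 − (1 − η σᵢ²)^k)/σᵢ`)
converge as `k → ∞` to `W^∞ = X Y⁺ = X V_y Σ_y⁻¹ U_yᵀ`. -/
theorem gradient_descent_converges_to_pseudoinverse
    (n N : ℕ) (η : ℝ)
    (X : Matrix (Fin n) (Fin N) ℝ)
    (Uy : Matrix (Fin n) (Fin N) ℝ) (Vy : Matrix (Fin N) (Fin N) ℝ)
    (σs : Fin N → ℝ) (hσ : ∀ i, 0 < σs i)
    (hη : ∀ i, 0 < η * σs i ^ 2 ∧ η * σs i ^ 2 ≤ 1) :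
    Tendsto
      (fun k : ℕ =>
        X * Vy * Matrix.diagonal (fun i => (1 - (1 - η * σs i ^ 2) ^ k) / σs i) * Uyᵀ)
      atTop
      (nhds (X * (Vy * Matrix.diagonal (fun i => (σs i)⁻¹) * Uyᵀ))) :=
  gradient_descent_converges_to_pseudoinverse_general n N η X Uy Vy σs hη
end

section
/- Suppose Q, Q̂ ∈ ℝ^{n×n} are symmetric, U and Û consist of the r leading orthonormal eigenvectors (singular vectors) of Q and Q̂ respectively, and σ_r(Q) > σ_{r+1}(Q). Then ‖ÛÛᵀ − UUᵀ‖ ≤ (2/(σ_r(Q) − σ_{r+1}(Q)))·‖Q̂ − Q‖ (spectral norms). Moreover ‖ÛÛᵀ − UUᵀ‖ = ‖Û_⊥ᵀU‖, where Û_⊥ is the orthonormal complement of Û. -/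
/-!
Write `S = Û⊥ᵀ U`. Splitting `Û Ûᵀ - U Uᵀ = Û (Ûᵀ U⊥) U⊥ᵀ - Û⊥ S Uᵀ` into two blocks with
orthogonal ranges acting on complementary coordinates gives `‖Û Ûᵀ - U Uᵀ‖ = ‖S‖`, once one knows
`‖Ûᵀ U⊥‖ = ‖S‖`: their squares are `‖1 - A Aᵀ‖` and `‖1 - Aᵀ A‖` for the square matrix `A = Ûᵀ U`,
and `A Aᵀ`, `Aᵀ A` have the same spectrum.

For the bound, `Û⊥ᵀ (Q̂ - Q) U = Λ̂₂ S - S Λ₁` (a Sylvester equation). Testing it against a top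
singular pair of `S` gives `‖S‖ (a - max Λ̂₂) ≤ ‖Q̂ - Q‖`, and a Courant–Fischer dimension count
(Weyl's inequality) gives `max Λ̂₂ ≤ b + ‖Q̂ - Q‖`; as `‖S‖ ≤ 1`, `‖S‖ (a - b) ≤ 2 ‖Q̂ - Q‖`.
-/

open Matrix

/-- The spectral (ℓ²-operator) norm of a real matrix. -/
noncomputable def specNorm {m n : ℕ} (A : Matrix (Fin m) (Fin n) ℝ) : ℝ :=
  ‖LinearMap.toContinuousLinearMap (Matrix.toEuclideanLin A)‖

open scoped Matrix.Norms.L2Operator RealInnerProductSpace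

namespace ContinuousLinearMap

variable {E F : Type*} [NormedAddCommGroup E] [InnerProductSpace ℝ E]
  [NormedAddCommGroup F] [InnerProductSpace ℝ F]

lemma exists_norm_eq_one_norm_apply_eq_opNorm [FiniteDimensional ℝ E] [Nontrivial E]
    (T : E →L[ℝ] F) : ∃ u, ‖u‖ = 1 ∧ ‖T u‖ = ‖T‖ := by
  have hK : IsCompact ((fun x => ‖T x‖) '' Metric.sphere (0 : E) 1) :=
    (isCompact_sphere 0 1).image (by fun_prop)
  have hne : ((fun x => ‖T x‖) '' Metric.sphere (0 : E) 1).Nonempty :=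
    (NormedSpace.sphere_nonempty.2 zero_le_one).image _
  obtain ⟨u, hu, hTu⟩ := hK.sSup_mem hne
  exact ⟨u, mem_sphere_zero_iff_norm.1 hu, hTu.trans T.sSup_sphere_eq_norm⟩

lemma adjoint_apply_apply_of_norm_apply_eq_opNorm [CompleteSpace E] [CompleteSpace F]
    (T : E →L[ℝ] F) {u : E} (hu : ‖u‖ = 1) (hTu : ‖T u‖ = ‖T‖) :
    adjoint T (T u) = ‖T‖ ^ 2 • u := by
  set w := adjoint T (T u)
  have hinner : ⟪w, u⟫ = ‖T‖ ^ 2 := by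
    rw [adjoint_inner_left, real_inner_self_eq_norm_sq, hTu]
  have hw : ‖w‖ ≤ ‖T‖ ^ 2 := by
    calc ‖w‖ ≤ ‖adjoint T‖ * ‖T u‖ := (adjoint T).le_opNorm _
      _ = ‖T‖ ^ 2 := by rw [LinearIsometryEquiv.norm_map, hTu, sq]
  -- so Cauchy–Schwarz is an equality for `w` and `u`
  have hCS : ⟪w, u⟫ ≤ ‖w‖ * ‖u‖ := real_inner_le_norm _ _
  have hnorm : ‖w‖ = ‖T‖ ^ 2 := le_antisymm hw (by rw [hu, mul_one] at hCS; linarith)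
  have := inner_eq_norm_mul_iff_real.1 (by rw [hinner, hnorm, hu, mul_one] : ⟪w, u⟫ = ‖w‖ * ‖u‖)
  rwa [hu, one_smul, hnorm] at this

theorem le_add_opNorm_sub_of_finrank_lt [FiniteDimensional ℝ E] {A B : E →L[ℝ] E}
    {V K : Submodule ℝ E}
    (hdim : Module.finrank ℝ E < Module.finrank ℝ V + Module.finrank ℝ K) {μ b : ℝ}
    (hA : ∀ x ∈ V, μ * ‖x‖ ^ 2 ≤ ⟪x, A x⟫) (hB : ∀ x ∈ K, ⟪x, B x⟫ ≤ b * ‖x‖ ^ 2) :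
    μ ≤ b + ‖A - B‖ := by
  have hVK : V ⊓ K ≠ ⊥ := by
    intro h
    have := Submodule.finrank_sup_add_finrank_inf_eq V K
    rw [h, finrank_bot, add_zero] at this
    exact (Submodule.finrank_le (V ⊔ K)).not_gt (this ▸ hdim)
  obtain ⟨x, hx, hx0⟩ := Submodule.exists_mem_ne_zero_of_ne_bot hVK
  have hdiff : ⟪x, (A - B) x⟫ ≤ ‖A - B‖ * ‖x‖ ^ 2 :=
    calc ⟪x, (A - B) x⟫ ≤ ‖x‖ * ‖(A - B) x‖ := real_inner_le_norm _ _
      _ ≤ ‖x‖ * (‖A - B‖ * ‖x‖) := by gcongr; exact (A - B).le_opNorm x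
      _ = ‖A - B‖ * ‖x‖ ^ 2 := by ring
  have hsplit : ⟪x, A x⟫ = ⟪x, B x⟫ + ⟪x, (A - B) x⟫ := by
    rw [_root_.sub_apply, inner_sub_right]; ring
  have hle : μ * ‖x‖ ^ 2 ≤ (b + ‖A - B‖) * ‖x‖ ^ 2 := by
    linarith [hA x hx.1, hB x hx.2]
  exact le_of_mul_le_mul_right hle (by positivity)

end ContinuousLinearMap

namespace Matrix

variable {k l m n : Type*} [Fintype k] [Fintype l] [Fintype m] [Fintype n]

noncomputable abbrev toL2Op [DecidableEq n] :
    Matrix m n ℝ ≃ₗ[ℝ] (EuclideanSpace ℝ n →L[ℝ] EuclideanSpace ℝ m) :=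
  toEuclideanLin.trans LinearMap.toContinuousLinearMap

@[simp]
lemma ofLp_toL2Op [DecidableEq n] (A : Matrix m n ℝ) (x : EuclideanSpace ℝ n) :
    (toL2Op A x).ofLp = A *ᵥ x.ofLp := rfl

lemma norm_toL2Op [DecidableEq n] (A : Matrix m n ℝ) : ‖toL2Op A‖ = ‖A‖ := rfl

lemma toL2Op_mul [DecidableEq m] [DecidableEq n] (A : Matrix l m ℝ) (B : Matrix m n ℝ) :
    toL2Op (A * B) = (toL2Op A).comp (toL2Op B) := by
  ext x i
  simp [mulVec_mulVec]

lemma toL2Op_transpose [DecidableEq m] [DecidableEq n] (A : Matrix m n ℝ) :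
    toL2Op Aᵀ = ContinuousLinearMap.adjoint (toL2Op A) := by
  rw [← conjTranspose_eq_transpose_of_trivial, LinearEquiv.trans_apply,
    toEuclideanLin_conjTranspose_eq_adjoint]
  exact LinearMap.adjoint_toContinuousLinearMap _

lemma toL2Op_one [DecidableEq n] : toL2Op (1 : Matrix n n ℝ) = ContinuousLinearMap.id ℝ _ := by
  ext x i
  simp

lemma toL2Op_diagonal_apply [DecidableEq n] (d : n → ℝ) (x : EuclideanSpace ℝ n) (i : n) :
    toL2Op (diagonal d) x i = d i * x i := by
  simp [mulVec_diagonal]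

lemma l2_opNorm_transpose [DecidableEq m] [DecidableEq n] (A : Matrix m n ℝ) : ‖Aᵀ‖ = ‖A‖ := by
  rw [← conjTranspose_eq_transpose_of_trivial, l2_opNorm_conjTranspose]

lemma inner_toL2Op_left [DecidableEq m] [DecidableEq n] (A : Matrix m n ℝ) (x y) :
    ⟪toL2Op A x, y⟫ = ⟪x, toL2Op Aᵀ y⟫ := by
  rw [toL2Op_transpose, ContinuousLinearMap.adjoint_inner_right]

lemma l2_opNorm_one_le [DecidableEq n] : ‖(1 : Matrix n n ℝ)‖ ≤ 1 := by
  rw [← norm_toL2Op, toL2Op_one]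
  exact ContinuousLinearMap.norm_id_le

lemma l2_opNorm_le_one_of_transpose_mul_self [DecidableEq m] [DecidableEq n] {A : Matrix m n ℝ}
    (hA : Aᵀ * A = 1) : ‖A‖ ≤ 1 := by
  have h : ‖A‖ * ‖A‖ ≤ 1 := by
    rw [← l2_opNorm_conjTranspose_mul_self, conjTranspose_eq_transpose_of_trivial, hA]
    exact l2_opNorm_one_le
  nlinarith [norm_nonneg A]

lemma l2_opNorm_isometry_mul [DecidableEq m] [DecidableEq n] [DecidableEq l] {V : Matrix m n ℝ}
    (hV : Vᵀ * V = 1) (M : Matrix n l ℝ) : ‖V * M‖ = ‖M‖ := by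
  have h : ‖V * M‖ * ‖V * M‖ = ‖M‖ * ‖M‖ := by
    rw [← l2_opNorm_conjTranspose_mul_self, ← l2_opNorm_conjTranspose_mul_self,
      conjTranspose_eq_transpose_of_trivial, conjTranspose_eq_transpose_of_trivial,
      transpose_mul, Matrix.mul_assoc, ← Matrix.mul_assoc Vᵀ, hV, Matrix.one_mul]
  exact (mul_self_inj (norm_nonneg _) (norm_nonneg _)).1 h

theorem spectrum_mul_comm {K : Type*} [Field K] [DecidableEq n] (A B : Matrix n n K) :
    spectrum K (A * B) = spectrum K (B * A) := by
  ext μ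
  rcases eq_or_ne μ 0 with rfl | hμ
  · simp only [spectrum.zero_mem_iff, isUnit_iff_isUnit_det, det_mul, mul_comm]
  · have h := congrArg (μ ∈ ·) (spectrum.nonzero_mul_comm A B)
    simpa [hμ] using h

lemma IsHermitian.spectralRadius_eq_l2_opNNNorm [DecidableEq n] {A : Matrix n n ℝ}
    (hA : A.IsHermitian) : spectralRadius ℝ A = ‖A‖₊ := by
  have h := ContinuousLinearMap.spectralRadius_eq_nnnorm _ (hA.isSelfAdjoint.map
    (toEuclideanCLM (n := n) (𝕜 := ℝ)))
  rw [cstar_nnnorm_def, ← h, spectralRadius, spectralRadius,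
    ← AlgEquiv.spectrum_eq (toEuclideanCLM (n := n) (𝕜 := ℝ)).toAlgEquiv A]
  rfl

lemma l2_opNorm_one_sub_transpose_mul_self [DecidableEq n] (A : Matrix n n ℝ) :
    ‖1 - Aᵀ * A‖ = ‖1 - A * Aᵀ‖ := by
  have herm : ∀ B C : Matrix n n ℝ, Cᵀ = B → (1 - B * C).IsHermitian := fun B C h => by
    simp [IsHermitian, conjTranspose_eq_transpose_of_trivial, transpose_sub, ← h]
  have hspec : spectrum ℝ (1 - Aᵀ * A) = spectrum ℝ (1 - A * Aᵀ) := by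
    rw [← map_one (algebraMap ℝ _), ← spectrum.singleton_sub_eq, ← spectrum.singleton_sub_eq,
      spectrum_mul_comm]
  have h₁ := (herm _ A rfl).spectralRadius_eq_l2_opNNNorm
  have h₂ := (herm _ Aᵀ (transpose_transpose A)).spectralRadius_eq_l2_opNNNorm
  rw [spectralRadius, hspec, ← spectralRadius, h₂] at h₁
  exact congrArg NNReal.toReal (ENNReal.coe_injective h₁).symm

lemma norm_toL2Op_transpose_apply_sq [DecidableEq m] [DecidableEq n] (W : Matrix m n ℝ)
    (x : EuclideanSpace ℝ m) : ‖toL2Op Wᵀ x‖ ^ 2 = ⟪x, toL2Op (W * Wᵀ) x⟫ := by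
  rw [← real_inner_self_eq_norm_sq, inner_toL2Op_left, transpose_transpose, toL2Op_mul]
  rfl

lemma norm_sq_add_norm_sq_of_mul_transpose_add [DecidableEq m] [DecidableEq n] [DecidableEq l]
    {W₁ : Matrix m n ℝ} {W₂ : Matrix m l ℝ} (hW : W₁ * W₁ᵀ + W₂ * W₂ᵀ = 1)
    (x : EuclideanSpace ℝ m) : ‖toL2Op W₁ᵀ x‖ ^ 2 + ‖toL2Op W₂ᵀ x‖ ^ 2 = ‖x‖ ^ 2 := by
  rw [norm_toL2Op_transpose_apply_sq, norm_toL2Op_transpose_apply_sq, ← inner_add_right,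
    ← _root_.add_apply, ← map_add, hW, toL2Op_one, ContinuousLinearMap.id_apply,
    real_inner_self_eq_norm_sq]

lemma l2_opNorm_mul_transpose_add_le_max [DecidableEq m] [DecidableEq n] [DecidableEq l]
    [DecidableEq k] {A : Matrix k n ℝ} {B : Matrix k l ℝ} {W₁ : Matrix m n ℝ}
    {W₂ : Matrix m l ℝ} (hAB : Aᵀ * B = 0) (hW : W₁ * W₁ᵀ + W₂ * W₂ᵀ = 1) :
    ‖A * W₁ᵀ + B * W₂ᵀ‖ ≤ max ‖A‖ ‖B‖ := by
  rw [← norm_toL2Op]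
  refine ContinuousLinearMap.opNorm_le_bound _ (by positivity) fun x => ?_
  set y₁ := toL2Op W₁ᵀ x
  set y₂ := toL2Op W₂ᵀ x
  have horth : ⟪toL2Op A y₁, toL2Op B y₂⟫ = 0 := by
    rw [inner_toL2Op_left, ← ContinuousLinearMap.comp_apply, ← toL2Op_mul, hAB, map_zero]
    simp
  have hsplit : toL2Op (A * W₁ᵀ + B * W₂ᵀ) x = toL2Op A y₁ + toL2Op B y₂ := by
    simp only [map_add, toL2Op_mul]
    rfl
  have hA := (toL2Op A).le_opNorm y₁
  have hB := (toL2Op B).le_opNorm y₂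
  rw [norm_toL2Op] at hA hB
  have hsq : ‖toL2Op (A * W₁ᵀ + B * W₂ᵀ) x‖ ^ 2 ≤ (max ‖A‖ ‖B‖ * ‖x‖) ^ 2 := by
    rw [hsplit, norm_add_sq_real, horth, mul_pow, ← norm_sq_add_norm_sq_of_mul_transpose_add hW x]
    have h₁ : ‖toL2Op A y₁‖ ^ 2 ≤ (max ‖A‖ ‖B‖ * ‖y₁‖) ^ 2 := by
      gcongr; exact hA.trans (by gcongr; exact le_max_left _ _)
    have h₂ : ‖toL2Op B y₂‖ ^ 2 ≤ (max ‖A‖ ‖B‖ * ‖y₂‖) ^ 2 := by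
      gcongr; exact hB.trans (by gcongr; exact le_max_right _ _)
    nlinarith
  exact (pow_le_pow_iff_left₀ (norm_nonneg _) (by positivity) two_ne_zero).1 hsq

section QuadraticForms

variable [DecidableEq n]

lemma inner_toL2Op_diagonal (d : n → ℝ) (x : EuclideanSpace ℝ n) :
    ⟪x, toL2Op (diagonal d) x⟫ = ∑ i, d i * x i ^ 2 := by
  simp only [PiLp.inner_apply, toL2Op_diagonal_apply, RCLike.inner_apply, conj_trivial]
  exact Finset.sum_congr rfl fun i _ => by ring

lemma inner_toL2Op_diagonal_le {d : n → ℝ} {β : ℝ} (hd : ∀ i, d i ≤ β) (x : EuclideanSpace ℝ n) :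
    ⟪x, toL2Op (diagonal d) x⟫ ≤ β * ‖x‖ ^ 2 := by
  rw [inner_toL2Op_diagonal, EuclideanSpace.real_norm_sq_eq, Finset.mul_sum]
  exact Finset.sum_le_sum fun i _ => by gcongr; exact hd i

lemma le_inner_toL2Op_diagonal {d : n → ℝ} {α : ℝ} (hd : ∀ i, α ≤ d i) (x : EuclideanSpace ℝ n) :
    α * ‖x‖ ^ 2 ≤ ⟪x, toL2Op (diagonal d) x⟫ := by
  rw [inner_toL2Op_diagonal, EuclideanSpace.real_norm_sq_eq, Finset.mul_sum]
  exact Finset.sum_le_sum fun i _ => by gcongr; exact hd i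

lemma inner_toL2Op_conj [DecidableEq m] (U : Matrix m n ℝ) (D : Matrix n n ℝ)
    (x : EuclideanSpace ℝ m) :
    ⟪x, toL2Op (U * D * Uᵀ) x⟫ = ⟪toL2Op Uᵀ x, toL2Op D (toL2Op Uᵀ x)⟫ := by
  rw [toL2Op_mul, toL2Op_mul, ContinuousLinearMap.comp_apply, ContinuousLinearMap.comp_apply,
    inner_toL2Op_left, transpose_transpose]

end QuadraticForms

lemma mul_sub_le_l2_opNorm_diagonal_mul_sub_mul_diagonal [DecidableEq m] [DecidableEq n]
    (S : Matrix m n ℝ) {d₁ : n → ℝ} {d₂ : m → ℝ} {α β : ℝ} (h₁ : ∀ i, α ≤ d₁ i)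
    (h₂ : ∀ i, d₂ i ≤ β) : ‖S‖ * (α - β) ≤ ‖diagonal d₂ * S - S * diagonal d₁‖ := by
  rcases (norm_nonneg S).eq_or_lt with hSpos | hSpos
  · rw [← hSpos, zero_mul]; exact norm_nonneg _
  have : Nontrivial (EuclideanSpace ℝ n) := by
    by_contra h
    rw [not_nontrivial_iff_subsingleton] at h
    refine hSpos.ne' (le_antisymm ?_ (norm_nonneg S))
    exact (toL2Op S).opNorm_le_bound le_rfl fun x => by simp [Subsingleton.elim x 0]
  -- Test the equation against a top singular pair `(u, S u)`, for which `Sᵀ S u = ‖S‖² u`.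
  obtain ⟨u, hu, hSu⟩ := (toL2Op S).exists_norm_eq_one_norm_apply_eq_opNorm
  have hadj := (toL2Op S).adjoint_apply_apply_of_norm_apply_eq_opNorm hu hSu
  rw [← toL2Op_transpose, norm_toL2Op] at hadj
  rw [norm_toL2Op] at hSu
  set y := toL2Op S u
  set E := diagonal d₂ * S - S * diagonal d₁
  have hupper : ⟪y, toL2Op E u⟫ ≤ ‖S‖ ^ 2 * (β - α) := by
    have e₁ : ⟪y, toL2Op (diagonal d₂ * S) u⟫ = ⟪y, toL2Op (diagonal d₂) y⟫ := by
      rw [toL2Op_mul]; rfl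
    have e₂ : ⟪y, toL2Op (S * diagonal d₁) u⟫ = ‖S‖ ^ 2 * ⟪u, toL2Op (diagonal d₁) u⟫ := by
      rw [toL2Op_mul, ContinuousLinearMap.comp_apply, real_inner_comm, inner_toL2Op_left, hadj,
        real_inner_smul_right, real_inner_comm]
    have h : ⟪y, toL2Op E u⟫
        = ⟪y, toL2Op (diagonal d₂) y⟫ - ‖S‖ ^ 2 * ⟪u, toL2Op (diagonal d₁) u⟫ := by
      rw [map_sub, _root_.sub_apply, inner_sub_right, e₁, e₂]
    have h₂' := inner_toL2Op_diagonal_le h₂ y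
    have h₁' := le_inner_toL2Op_diagonal h₁ u
    rw [hSu] at h₂'
    rw [hu] at h₁'
    nlinarith
  have hlower : -(‖S‖ * ‖E‖) ≤ ⟪y, toL2Op E u⟫ := by
    have h := abs_real_inner_le_norm y (toL2Op E u)
    have hE := (toL2Op E).le_opNorm u
    rw [norm_toL2Op, hu, mul_one] at hE
    rw [hSu] at h
    nlinarith [neg_abs_le ⟪y, toL2Op E u⟫]
  have hle : ‖S‖ * (‖S‖ * (α - β)) ≤ ‖S‖ * ‖E‖ := by nlinarith
  exact le_of_mul_le_mul_left hle hSpos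

/-- The block matrix `[U V]` is orthogonal. -/
structure IsOrthoComplement [DecidableEq n] [DecidableEq l] [DecidableEq m]
    (U : Matrix m n ℝ) (V : Matrix m l ℝ) : Prop where
  transpose_mul_self_left : Uᵀ * U = 1
  transpose_mul_self_right : Vᵀ * V = 1
  mul_transpose_add : U * Uᵀ + V * Vᵀ = 1

namespace IsOrthoComplement

variable [DecidableEq n] [DecidableEq l] [DecidableEq m] {U : Matrix m n ℝ} {V : Matrix m l ℝ}

lemma transpose_mul_eq_zero (h : IsOrthoComplement U V) : Vᵀ * U = 0 := by
  have key : Vᵀ * U = Vᵀ * U * (Uᵀ * U) + Vᵀ * V * (Vᵀ * U) :=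
    calc Vᵀ * U = Vᵀ * (U * Uᵀ + V * Vᵀ) * U := by rw [h.mul_transpose_add, Matrix.mul_one]
      _ = _ := by simp only [Matrix.mul_add, Matrix.add_mul, Matrix.mul_assoc]
  rwa [h.transpose_mul_self_left, h.transpose_mul_self_right, Matrix.mul_one, Matrix.one_mul,
    left_eq_add] at key

lemma symm (h : IsOrthoComplement U V) : IsOrthoComplement V U :=
  ⟨h.transpose_mul_self_right, h.transpose_mul_self_left, by rw [add_comm, h.mul_transpose_add]⟩

lemma mul_transpose_eq (h : IsOrthoComplement U V) : V * Vᵀ = 1 - U * Uᵀ :=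
  eq_sub_of_add_eq' h.mul_transpose_add

lemma card_add_card (h : IsOrthoComplement U V) :
    Fintype.card n + Fintype.card l = Fintype.card m := by
  have h' := congrArg trace h.mul_transpose_add
  rw [trace_add, trace_mul_comm U, trace_mul_comm V, h.transpose_mul_self_left,
    h.transpose_mul_self_right, trace_one, trace_one, trace_one] at h'
  exact_mod_cast h'

lemma norm_sq_add_norm_sq (h : IsOrthoComplement U V) (x : EuclideanSpace ℝ m) :
    ‖toL2Op Uᵀ x‖ ^ 2 + ‖toL2Op Vᵀ x‖ ^ 2 = ‖x‖ ^ 2 :=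
  norm_sq_add_norm_sq_of_mul_transpose_add h.mul_transpose_add x

lemma conj_add_mul_left (h : IsOrthoComplement U V) (D : Matrix n n ℝ) (D' : Matrix l l ℝ) :
    (U * D * Uᵀ + V * D' * Vᵀ) * U = U * D := by
  simp only [Matrix.add_mul, Matrix.mul_assoc, h.transpose_mul_self_left,
    h.transpose_mul_eq_zero, Matrix.mul_zero, Matrix.mul_one, add_zero]

lemma transpose_mul_conj_add (h : IsOrthoComplement U V) (D : Matrix n n ℝ) (D' : Matrix l l ℝ) :
    Vᵀ * (U * D * Uᵀ + V * D' * Vᵀ) = D' * Vᵀ := by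
  simp only [Matrix.mul_add, ← Matrix.mul_assoc, h.transpose_mul_eq_zero,
    h.transpose_mul_self_right, Matrix.zero_mul, Matrix.one_mul, zero_add]

end IsOrthoComplement

section OrthoComplement

variable [DecidableEq n] [DecidableEq l] [DecidableEq m] {U V : Matrix m n ℝ} {U' V' : Matrix m l ℝ}

lemma l2_opNorm_transpose_mul_comm (hU : IsOrthoComplement U U') (hV : IsOrthoComplement V V') :
    ‖Vᵀ * U'‖ = ‖V'ᵀ * U‖ := by
  set A := Vᵀ * U
  have h₁ : (V'ᵀ * U)ᵀ * (V'ᵀ * U) = 1 - Aᵀ * A :=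
    calc (V'ᵀ * U)ᵀ * (V'ᵀ * U) = Uᵀ * (V' * V'ᵀ) * U := by
          simp only [transpose_mul, transpose_transpose, Matrix.mul_assoc]
      _ = 1 - Aᵀ * A := by
          simp only [hV.mul_transpose_eq, Matrix.mul_sub, Matrix.sub_mul, Matrix.mul_one,
            hU.transpose_mul_self_left, A, transpose_mul, transpose_transpose, Matrix.mul_assoc]
  have h₂ : (Vᵀ * U') * (Vᵀ * U')ᵀ = 1 - A * Aᵀ :=
    calc (Vᵀ * U') * (Vᵀ * U')ᵀ = Vᵀ * (U' * U'ᵀ) * V := by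
          simp only [transpose_mul, transpose_transpose, Matrix.mul_assoc]
      _ = 1 - A * Aᵀ := by
          simp only [hU.mul_transpose_eq, Matrix.mul_sub, Matrix.sub_mul, Matrix.mul_one,
            hV.transpose_mul_self_left, A, transpose_mul, transpose_transpose, Matrix.mul_assoc]
  have h : ‖V'ᵀ * U‖ * ‖V'ᵀ * U‖ = ‖Vᵀ * U'‖ * ‖Vᵀ * U'‖ := by
    rw [← l2_opNorm_conjTranspose_mul_self, conjTranspose_eq_transpose_of_trivial, h₁,
      l2_opNorm_one_sub_transpose_mul_self, ← h₂, ← l2_opNorm_transpose (Vᵀ * U'),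
      ← l2_opNorm_conjTranspose_mul_self, conjTranspose_eq_transpose_of_trivial,
      transpose_transpose]
  exact ((mul_self_inj (norm_nonneg _) (norm_nonneg _)).1 h).symm

lemma l2_opNorm_mul_transpose_sub_eq (hU : IsOrthoComplement U U') (hV : IsOrthoComplement V V') :
    ‖V * Vᵀ - U * Uᵀ‖ = ‖V'ᵀ * U‖ := by
  refine le_antisymm ?_ ?_
  · have hD : V * Vᵀ - U * Uᵀ = V * (Vᵀ * U') * U'ᵀ + -(V' * (V'ᵀ * U)) * Uᵀ :=
      calc V * Vᵀ - U * Uᵀ = V * Vᵀ * (U * Uᵀ + U' * U'ᵀ) - (V * Vᵀ + V' * V'ᵀ) * (U * Uᵀ) := by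
            rw [hU.mul_transpose_add, hV.mul_transpose_add, Matrix.mul_one, Matrix.one_mul]
        _ = _ := by
            simp only [Matrix.mul_add, Matrix.add_mul, Matrix.mul_assoc, Matrix.neg_mul]
            abel
    have hAB : (V * (Vᵀ * U'))ᵀ * -(V' * (V'ᵀ * U)) = 0 := by
      simp only [transpose_mul, Matrix.mul_neg, Matrix.mul_assoc, ← Matrix.mul_assoc Vᵀ V',
        hV.symm.transpose_mul_eq_zero, Matrix.zero_mul, Matrix.mul_zero, neg_zero]
    rw [hD]
    refine (l2_opNorm_mul_transpose_add_le_max hAB hU.symm.mul_transpose_add).trans_eq ?_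
    rw [norm_neg, l2_opNorm_isometry_mul hV.transpose_mul_self_left,
      l2_opNorm_isometry_mul hV.transpose_mul_self_right, l2_opNorm_transpose_mul_comm hU hV,
      max_self]
  · have hS : V'ᵀ * U = V'ᵀ * (U * Uᵀ - V * Vᵀ) * U := by
      simp only [Matrix.mul_sub, Matrix.mul_assoc, hU.transpose_mul_self_left,
        Matrix.mul_one, ← Matrix.mul_assoc V'ᵀ V, hV.transpose_mul_eq_zero, Matrix.zero_mul,
        sub_zero]
    calc ‖V'ᵀ * U‖ ≤ ‖V'ᵀ‖ * ‖U * Uᵀ - V * Vᵀ‖ * ‖U‖ := by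
          rw [hS]
          exact (l2_opNorm_mul _ _).trans (by gcongr; exact l2_opNorm_mul _ _)
      _ ≤ 1 * ‖V * Vᵀ - U * Uᵀ‖ * 1 := by
          rw [norm_sub_rev, l2_opNorm_transpose]
          gcongr
          · exact l2_opNorm_le_one_of_transpose_mul_self hV.transpose_mul_self_right
          · exact l2_opNorm_le_one_of_transpose_mul_self hU.transpose_mul_self_left
      _ = ‖V * Vᵀ - U * Uᵀ‖ := by ring

lemma le_add_l2_opNorm_sub_of_spectral_decomposition (hU : IsOrthoComplement U U')
    (hV : IsOrthoComplement V V') {d₁ e₁ : n → ℝ} {d₂ e₂ : l → ℝ} {b : ℝ} (hb : ∀ i, d₂ i ≤ b)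
    (he : ∀ i j, e₂ j ≤ e₁ i) (j : l) :
    e₂ j ≤ b + ‖(V * diagonal e₁ * Vᵀ + V' * diagonal e₂ * V'ᵀ)
      - (U * diagonal d₁ * Uᵀ + U' * diagonal d₂ * U'ᵀ)‖ := by
  set f := (toL2Op Uᵀ).toLinearMap
  -- `ker g` is spanned by the columns of `V` and the `j`-th column of `V'`.
  set g := LinearMap.pi fun i : {i // i ≠ j} =>
    (EuclideanSpace.proj (i : l)).toLinearMap ∘ₗ (toL2Op V'ᵀ).toLinearMap
  have hf := f.finrank_range_add_finrank_ker
  have hf' := Submodule.finrank_le (LinearMap.range f)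
  have hg := g.finrank_range_add_finrank_ker
  have hg' := Submodule.finrank_le (LinearMap.range g)
  have hcard_ne : Fintype.card {i // i ≠ j} = Fintype.card l - 1 := by simp
  rw [finrank_euclideanSpace] at hf hf' hg
  rw [Module.finrank_fintype_fun_eq_card, hcard_ne] at hg'
  have hcard := hU.card_add_card
  have hl : 0 < Fintype.card l := Fintype.card_pos_iff.2 ⟨j⟩
  rw [← norm_toL2Op, map_sub]
  refine ContinuousLinearMap.le_add_opNorm_sub_of_finrank_lt (V := LinearMap.ker g)
    (K := LinearMap.ker f) ?_ (fun x hx => ?_) (fun x hx => ?_)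
  · rw [finrank_euclideanSpace]
    omega
  · have hz : ∀ i, i ≠ j → toL2Op V'ᵀ x i = 0 := fun i hi => by
      simpa [g] using congrFun (LinearMap.mem_ker.1 hx) ⟨i, hi⟩
    have hfirst := le_inner_toL2Op_diagonal (fun i => he i j) (toL2Op Vᵀ x)
    have hsecond : ⟪toL2Op V'ᵀ x, toL2Op (diagonal e₂) (toL2Op V'ᵀ x)⟫
        = e₂ j * ‖toL2Op V'ᵀ x‖ ^ 2 := by
      rw [inner_toL2Op_diagonal, EuclideanSpace.real_norm_sq_eq, Finset.mul_sum]
      refine Finset.sum_congr rfl fun i _ => ?_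
      rcases eq_or_ne i j with rfl | hi
      · rfl
      · rw [hz i hi]; ring
    rw [map_add, _root_.add_apply, inner_add_right, inner_toL2Op_conj, inner_toL2Op_conj,
      ← hV.norm_sq_add_norm_sq x]
    linarith
  · have hUx : toL2Op Uᵀ x = 0 := LinearMap.mem_ker.1 hx
    rw [map_add, _root_.add_apply, inner_add_right, inner_toL2Op_conj, inner_toL2Op_conj, hUx,
      inner_zero_left, zero_add, ← hU.norm_sq_add_norm_sq x, hUx, norm_zero]
    simpa using inner_toL2Op_diagonal_le hb (toL2Op U'ᵀ x)

lemma l2_opNorm_transpose_mul_mul_sub_le (hU : IsOrthoComplement U U')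
    (hV : IsOrthoComplement V V') {Q Q' : Matrix m m ℝ} {d₁ e₁ : n → ℝ} {d₂ e₂ : l → ℝ} {a b : ℝ}
    (hQ : Q = U * diagonal d₁ * Uᵀ + U' * diagonal d₂ * U'ᵀ)
    (hQ' : Q' = V * diagonal e₁ * Vᵀ + V' * diagonal e₂ * V'ᵀ)
    (he : ∀ i j, e₂ j ≤ e₁ i) (ha : ∀ i, a ≤ d₁ i) (hb : ∀ j, d₂ j ≤ b) :
    ‖V'ᵀ * U‖ * (a - b) ≤ 2 * ‖Q' - Q‖ := by
  have hweyl : ∀ j, e₂ j ≤ b + ‖Q' - Q‖ := fun j => by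
    rw [hQ, hQ']
    exact le_add_l2_opNorm_sub_of_spectral_decomposition hU hV hb he j
  have hsylvester :
      V'ᵀ * (Q' - Q) * U = diagonal e₂ * (V'ᵀ * U) - (V'ᵀ * U) * diagonal d₁ := by
    rw [Matrix.mul_sub, Matrix.sub_mul, hQ', hV.transpose_mul_conj_add, hQ, Matrix.mul_assoc V'ᵀ,
      hU.conj_add_mul_left, Matrix.mul_assoc, Matrix.mul_assoc]
  have hE : ‖V'ᵀ * (Q' - Q) * U‖ ≤ ‖Q' - Q‖ :=
    calc ‖V'ᵀ * (Q' - Q) * U‖ ≤ ‖V'ᵀ‖ * ‖Q' - Q‖ * ‖U‖ :=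
          (l2_opNorm_mul _ _).trans (by gcongr; exact l2_opNorm_mul _ _)
      _ ≤ 1 * ‖Q' - Q‖ * 1 := by
          rw [l2_opNorm_transpose]
          gcongr
          · exact l2_opNorm_le_one_of_transpose_mul_self hV.transpose_mul_self_right
          · exact l2_opNorm_le_one_of_transpose_mul_self hU.transpose_mul_self_left
      _ = ‖Q' - Q‖ := by ring
  have hS : ‖V'ᵀ * U‖ ≤ 1 := (l2_opNorm_mul _ _).trans <| by
    rw [l2_opNorm_transpose]
    exact mul_le_one₀ (l2_opNorm_le_one_of_transpose_mul_self hV.transpose_mul_self_right)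
      (norm_nonneg _) (l2_opNorm_le_one_of_transpose_mul_self hU.transpose_mul_self_left)
  have hgap := mul_sub_le_l2_opNorm_diagonal_mul_sub_mul_diagonal (V'ᵀ * U) ha hweyl
  rw [← hsylvester] at hgap
  nlinarith [norm_nonneg (V'ᵀ * U), norm_nonneg (Q' - Q)]

end OrthoComplement

end Matrix

lemma specNorm_eq_l2_opNorm {m n : ℕ} (A : Matrix (Fin m) (Fin n) ℝ) : specNorm A = ‖A‖ := rfl

theorem sin_theta_theorem_general
    (n r : ℕ)
    (Q Qhat : Matrix (Fin n) (Fin n) ℝ)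
    (U : Matrix (Fin n) (Fin r) ℝ) (Uperp : Matrix (Fin n) (Fin (n - r)) ℝ)
    (Uhat : Matrix (Fin n) (Fin r) ℝ) (Uhatperp : Matrix (Fin n) (Fin (n - r)) ℝ)
    (hU : Uᵀ * U = 1) (hUperp : Uperpᵀ * Uperp = 1)
    (hUcomp : U * Uᵀ + Uperp * Uperpᵀ = 1)
    (hUhat : Uhatᵀ * Uhat = 1) (hUhatperp : Uhatperpᵀ * Uhatperp = 1)
    (hUhatcomp : Uhat * Uhatᵀ + Uhatperp * Uhatperpᵀ = 1)
    (Λ₁ : Fin r → ℝ) (Λ₂ : Fin (n - r) → ℝ)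
    (Λhat₁ : Fin r → ℝ) (Λhat₂ : Fin (n - r) → ℝ)
    (hQdecomp : Q = U * Matrix.diagonal Λ₁ * Uᵀ + Uperp * Matrix.diagonal Λ₂ * Uperpᵀ)
    (hQhatdecomp : Qhat = Uhat * Matrix.diagonal Λhat₁ * Uhatᵀ
        + Uhatperp * Matrix.diagonal Λhat₂ * Uhatperpᵀ)
    (hleading : ∀ i j, Λhat₂ j ≤ Λhat₁ i)
    (a b : ℝ) (hgap : b < a)
    (ha : ∀ i, a ≤ Λ₁ i) (hb : ∀ j, Λ₂ j ≤ b) :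
    specNorm (Uhat * Uhatᵀ - U * Uᵀ) ≤ (2 / (a - b)) * specNorm (Qhat - Q)
    ∧ specNorm (Uhat * Uhatᵀ - U * Uᵀ) = specNorm (Uhatperpᵀ * U) := by
  have hUc : IsOrthoComplement U Uperp := ⟨hU, hUperp, hUcomp⟩
  have hUhatc : IsOrthoComplement Uhat Uhatperp := ⟨hUhat, hUhatperp, hUhatcomp⟩
  simp only [specNorm_eq_l2_opNorm]
  rw [l2_opNorm_mul_transpose_sub_eq hUc hUhatc, div_mul_eq_mul_div,
    le_div_iff₀ (sub_pos.2 hgap)]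
  exact ⟨l2_opNorm_transpose_mul_mul_sub_le hUc hUhatc hQdecomp hQhatdecomp hleading ha hb, rfl⟩

/-- **Sin-theta (Davis–Kahan / Cai–Zhang) theorem.**
Let `Q, Q̂` be symmetric with spectral decompositions `Q = U Λ₁ Uᵀ + U⊥ Λ₂ U⊥ᵀ` and
`Q̂ = Û Λ̂₁ Ûᵀ + Û⊥ Λ̂₂ Û⊥ᵀ`, where `U, Û` are the `r` leading orthonormal eigenvectors
(i.e. `Λ̂₂ ≤ Λ̂₁` entrywise for `Q̂`, and the eigenvalues of `Q` satisfy
`Λ₂ ≤ σ_{r+1}(Q) = b < a = σ_r(Q) ≤ Λ₁`). Then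
`‖Û Ûᵀ − U Uᵀ‖ ≤ (2/(a − b)) ‖Q̂ − Q‖`, and moreover `‖Û Ûᵀ − U Uᵀ‖ = ‖Û⊥ᵀ U‖`. -/
theorem sin_theta_theorem
    (n r : ℕ)
    (Q Qhat : Matrix (Fin n) (Fin n) ℝ)
    (hQ : Qᵀ = Q) (hQhat : Qhatᵀ = Qhat)
    (U : Matrix (Fin n) (Fin r) ℝ) (Uperp : Matrix (Fin n) (Fin (n - r)) ℝ)
    (Uhat : Matrix (Fin n) (Fin r) ℝ) (Uhatperp : Matrix (Fin n) (Fin (n - r)) ℝ)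
    (hU : Uᵀ * U = 1) (hUperp : Uperpᵀ * Uperp = 1)
    (hUcomp : U * Uᵀ + Uperp * Uperpᵀ = 1)
    (hUhat : Uhatᵀ * Uhat = 1) (hUhatperp : Uhatperpᵀ * Uhatperp = 1)
    (hUhatcomp : Uhat * Uhatᵀ + Uhatperp * Uhatperpᵀ = 1)
    (Λ₁ : Fin r → ℝ) (Λ₂ : Fin (n - r) → ℝ)
    (Λhat₁ : Fin r → ℝ) (Λhat₂ : Fin (n - r) → ℝ)
    (hQdecomp : Q = U * Matrix.diagonal Λ₁ * Uᵀ + Uperp * Matrix.diagonal Λ₂ * Uperpᵀ)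
    (hQhatdecomp : Qhat = Uhat * Matrix.diagonal Λhat₁ * Uhatᵀ
        + Uhatperp * Matrix.diagonal Λhat₂ * Uhatperpᵀ)
    (hleading : ∀ i j, Λhat₂ j ≤ Λhat₁ i)
    (a b : ℝ) (hgap : b < a)
    (ha : ∀ i, a ≤ Λ₁ i) (hb : ∀ j, Λ₂ j ≤ b) :
    specNorm (Uhat * Uhatᵀ - U * Uᵀ) ≤ (2 / (a - b)) * specNorm (Qhat - Q)
    ∧ specNorm (Uhat * Uhatᵀ - U * Uᵀ) = specNorm (Uhatperpᵀ * U) :=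
  sin_theta_theorem_general n r Q Qhat U Uperp Uhat Uhatperp hU hUperp hUcomp hUhat hUhatperp
    hUhatcomp Λ₁ Λ₂ Λhat₁ Λhat₂ hQdecomp hQhatdecomp hleading a b hgap ha hb
end
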